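/- arXiv:2003.03769 — 5 statements merged into one kernel-verified Lean document; each statement's English description precedes it below -/
import Mathlib

section
/- Let a, b be natural numbers with a + 2b ≥ 1, set r = a + 2b, and let s be a real number with s > 0. Then the function (x, y) ↦ (‖x‖⁴ + ‖y‖²)^((s − r)/4) on ℝᵃ × ℝᵇ is locally integrable with respect to Lebesgue measure (in particular it is integrable on the unit ball around the origin). -/
/-!
In the singular range `0 < s < r`, where `r = dim E + 2 dim F`, put `κ = 1 - s / r ∈ (0, 1)`.
Weighted AM-GM with weights `dim E / r` and `2 dim F / r` splits the gauge power into a product,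
`(‖x‖⁴ + ‖y‖²)^(-κ r / 4) ≤ ‖x‖^(-κ dim E) ‖y‖^(-κ dim F)`, and each factor is locally integrable
on its own space because `κ < 1`. For `s ≥ r` the function is continuous.
-/

open MeasureTheory Metric Module Filter

section

variable {X Y 𝕜 : Type*} [TopologicalSpace X] [MeasurableSpace X] [TopologicalSpace Y]
  [MeasurableSpace Y] [NormedRing 𝕜] {μ : Measure X} {ν : Measure Y} [SFinite μ] [SFinite ν]

theorem LocallyIntegrable.mul_prod {f : X → 𝕜} {g : Y → 𝕜} (hf : LocallyIntegrable f μ)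
    (hg : LocallyIntegrable g ν) :
    LocallyIntegrable (fun p : X × Y => f p.1 * g p.2) (μ.prod ν) := by
  rintro ⟨x, y⟩
  obtain ⟨U, hU, hfU⟩ := hf x
  obtain ⟨V, hV, hgV⟩ := hg y
  refine ⟨U ×ˢ V, prod_mem_nhds hU hV, ?_⟩
  rw [IntegrableOn, ← Measure.prod_restrict]
  exact hfU.mul_prod hgV

end

section

variable {E : Type*} [NormedAddCommGroup E] [NormedSpace ℝ E] [FiniteDimensional ℝ E]
  [MeasurableSpace E] [BorelSpace E] (μ : Measure E) [μ.IsAddHaarMeasure]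

theorem locallyIntegrable_norm_rpow_neg_mul_finrank {κ : ℝ} (hκ : κ < 1) :
    LocallyIntegrable (fun x : E => ‖x‖ ^ (-(κ * finrank ℝ E))) μ := by
  rcases Nat.eq_zero_or_pos (finrank ℝ E) with h0 | hpos
  · simp only [h0, CharP.cast_eq_zero, mul_zero, neg_zero, Real.rpow_zero]
    exact locallyIntegrable_const 1
  · refine locallyIntegrable_of_norm_le_rpow hpos (μ := μ) (C := 1) (α := κ * finrank ℝ E) ?_ ?_
      (continuous_norm.measurable.pow_const _).aestronglyMeasurable
    · have : (0 : ℝ) < finrank ℝ E := by exact_mod_cast hpos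
      nlinarith
    · filter_upwards with x
      rw [one_mul, Real.norm_of_nonneg (by positivity)]

theorem ae_norm_pos_or_finrank_eq_zero : ∀ᵐ x ∂μ, 0 < ‖x‖ ∨ finrank ℝ E = 0 := by
  rcases Nat.eq_zero_or_pos (finrank ℝ E) with h0 | hpos
  · exact Eventually.of_forall fun _ => Or.inr h0
  · have : Nontrivial E := Module.nontrivial_of_finrank_pos hpos
    filter_upwards [(Set.countable_singleton (0 : E)).ae_notMem μ] with x hx
    exact Or.inl (norm_pos_iff.2 hx)

end

/- `Real.rpow` has `0 ^ x = 0` for `x ≠ 0`, so a vanishing base is harmless only with weight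
zero. -/
theorem Real.rpow_add_le_rpow_mul_rpow {A B θ e : ℝ} (hA : 0 ≤ A) (hB : 0 ≤ B) (hθ₀ : 0 ≤ θ)
    (hθ₁ : θ ≤ 1) (he : e ≤ 0) (hAθ : 0 < A ∨ θ = 0) (hBθ : 0 < B ∨ θ = 1) :
    (A + B) ^ e ≤ A ^ (θ * e) * B ^ ((1 - θ) * e) := by
  have hpos : 0 < A ^ θ * B ^ (1 - θ) := by
    refine mul_pos ?_ ?_
    · rcases hAθ with hA' | rfl
      · exact Real.rpow_pos_of_pos hA' θ
      · simp
    · rcases hBθ with hB' | rfl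
      · exact Real.rpow_pos_of_pos hB' _
      · simp
  have hamgm : A ^ θ * B ^ (1 - θ) ≤ A + B :=
    calc A ^ θ * B ^ (1 - θ) ≤ θ * A + (1 - θ) * B :=
          Real.geom_mean_le_arith_mean2_weighted hθ₀ (by linarith) hA hB (by ring)
      _ ≤ A + B := by nlinarith
  calc (A + B) ^ e ≤ (A ^ θ * B ^ (1 - θ)) ^ e := Real.rpow_le_rpow_of_nonpos hpos hamgm he
    _ = A ^ (θ * e) * B ^ ((1 - θ) * e) := by
      rw [Real.mul_rpow (by positivity) (by positivity), Real.rpow_mul hA, Real.rpow_mul hB]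

theorem Real.rpow_pow_four_add_sq_le_rpow_mul_rpow {u v d₁ d₂ κ : ℝ} (hu : 0 ≤ u) (hv : 0 ≤ v)
    (hd₁ : 0 ≤ d₁) (hd₂ : 0 ≤ d₂) (hd : 0 < d₁ + 2 * d₂) (hκ : 0 ≤ κ) (hud : 0 < u ∨ d₁ = 0)
    (hvd : 0 < v ∨ d₂ = 0) :
    (u ^ 4 + v ^ 2) ^ (-(κ * (d₁ + 2 * d₂)) / 4) ≤ u ^ (-(κ * d₁)) * v ^ (-(κ * d₂)) := by
  set θ := d₁ / (d₁ + 2 * d₂)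
  have hθ₁ : θ ≤ 1 := by rw [div_le_one hd]; linarith
  have hAθ : 0 < u ^ 4 ∨ θ = 0 := hud.imp (pow_pos · 4) fun h => by simp [θ, h]
  have hBθ : 0 < v ^ 2 ∨ θ = 1 := hvd.imp (pow_pos · 2) fun h => by
    rw [div_eq_one_iff_eq hd.ne', h]; ring
  have hθd : θ * (d₁ + 2 * d₂) = d₁ := div_mul_cancel₀ _ hd.ne'
  convert Real.rpow_add_le_rpow_mul_rpow (by positivity) (by positivity) (by positivity) hθ₁
    (by nlinarith) hAθ hBθ (e := -(κ * (d₁ + 2 * d₂)) / 4) using 2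
  · rw [← Real.rpow_natCast_mul hu]
    congr 1
    push_cast
    linear_combination κ * hθd
  · rw [← Real.rpow_natCast_mul hv]
    congr 1
    push_cast
    linear_combination (-κ / 2) * hθd

section

variable {E F : Type*} [NormedAddCommGroup E] [NormedSpace ℝ E] [FiniteDimensional ℝ E]
  [MeasurableSpace E] [BorelSpace E] [NormedAddCommGroup F] [NormedSpace ℝ F]
  [FiniteDimensional ℝ F] [MeasurableSpace F] [BorelSpace F]
  (μ : Measure E) [μ.IsAddHaarMeasure] (ν : Measure F) [ν.IsAddHaarMeasure]

theorem locallyIntegrable_gauge_rpow {s : ℝ} (hs : 0 < s) :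
    LocallyIntegrable (fun p : E × F =>
      (‖p.1‖ ^ 4 + ‖p.2‖ ^ 2) ^ ((s - (finrank ℝ E + 2 * finrank ℝ F)) / 4)) (μ.prod ν) := by
  set r : ℝ := finrank ℝ E + 2 * finrank ℝ F
  rcases le_or_gt r s with hrs | hsr
  · exact Continuous.locallyIntegrable <|
      Continuous.rpow_const (by fun_prop) fun _ => Or.inr (by linarith)
  have hr : 0 < r := hs.trans hsr
  set κ := 1 - s / r
  have hκ₀ : 0 ≤ κ := sub_nonneg.2 ((div_le_one hr).2 hsr.le)
  have hκ₁ : κ < 1 := sub_lt_self 1 (div_pos hs hr)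
  have hsr_eq : s - r = -(κ * r) := by simp only [κ]; field_simp; ring
  refine (LocallyIntegrable.mul_prod (locallyIntegrable_norm_rpow_neg_mul_finrank μ hκ₁)
    (locallyIntegrable_norm_rpow_neg_mul_finrank ν hκ₁)).mono
    ((Measurable.pow_const (by fun_prop) _).aestronglyMeasurable) ?_
  filter_upwards [Measure.quasiMeasurePreserving_fst.ae (ae_norm_pos_or_finrank_eq_zero μ),
    Measure.quasiMeasurePreserving_snd.ae (ae_norm_pos_or_finrank_eq_zero ν)]
    with ⟨x, y⟩ hx hy
  rw [Real.norm_of_nonneg (by positivity), Real.norm_of_nonneg (by positivity), hsr_eq]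
  exact Real.rpow_pow_four_add_sq_le_rpow_mul_rpow (norm_nonneg x) (norm_nonneg y)
    (Nat.cast_nonneg _) (Nat.cast_nonneg _) hr hκ₀ (hx.imp_right Nat.cast_eq_zero.2)
    (hy.imp_right Nat.cast_eq_zero.2)

end

theorem stmt0_general (a b : ℕ) (s : ℝ) (hs : 0 < s) :
    LocallyIntegrable
      (fun p : EuclideanSpace ℝ (Fin a) × EuclideanSpace ℝ (Fin b) =>
        (‖p.1‖ ^ 4 + ‖p.2‖ ^ 2) ^ ((s - (a + 2 * b : ℕ)) / 4)) volume ∧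
    IntegrableOn
      (fun p : EuclideanSpace ℝ (Fin a) × EuclideanSpace ℝ (Fin b) =>
        (‖p.1‖ ^ 4 + ‖p.2‖ ^ 2) ^ ((s - (a + 2 * b : ℕ)) / 4))
      (Metric.ball 0 1) volume := by
  have hloc := locallyIntegrable_gauge_rpow
    (volume : Measure (EuclideanSpace ℝ (Fin a))) (volume : Measure (EuclideanSpace ℝ (Fin b))) hs
  simp only [finrank_euclideanSpace_fin, ← Measure.volume_eq_prod] at hloc
  push_cast
  exact ⟨hloc, (hloc.integrableOn_isCompact (isCompact_closedBall 0 1)).mono_set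
    ball_subset_closedBall⟩

/-- Lemma 1.1 (first half): for `r = a + 2b` the homogeneous dimension of
`V = ℝᵃ × ℝᵇ` and `s > 0`, the gauge power `N(x,y)^(s-r) = (‖x‖⁴ + ‖y‖²)^((s-r)/4)`
is locally integrable; in particular it is integrable on the unit ball. -/
theorem stmt0 (a b : ℕ) (hab : 1 ≤ a + 2 * b) (s : ℝ) (hs : 0 < s) :
    LocallyIntegrable
      (fun p : EuclideanSpace ℝ (Fin a) × EuclideanSpace ℝ (Fin b) =>
        (‖p.1‖ ^ 4 + ‖p.2‖ ^ 2) ^ ((s - (a + 2 * b : ℕ)) / 4)) volume ∧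
    IntegrableOn
      (fun p : EuclideanSpace ℝ (Fin a) × EuclideanSpace ℝ (Fin b) =>
        (‖p.1‖ ^ 4 + ‖p.2‖ ^ 2) ^ ((s - (a + 2 * b : ℕ)) / 4))
      (Metric.ball 0 1) volume :=
  stmt0_general a b s hs
end

section
/- Let a, b be natural numbers with a + 2b ≥ 1, set r = a + 2b, and let s be a real number with s ≤ 0. Then for every ε > 0 the function (x, y) ↦ (‖x‖⁴ + ‖y‖²)^((s − r)/4) is NOT integrable on the open ball of radius ε around the origin of ℝᵃ × ℝᵇ (with respect to Lebesgue measure). -/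
/-!
The dilations `δₜ(x, y) = (t x, t² y)` multiply Haar measure on `ℝᵃ × ℝᵇ` by `tʳ` and `N⁴`
by `t⁴`, so `I(t) = ∫_{N ≤ t} N^(s-r)` equals `tˢ I(1)`. Splitting `{N ≤ 1}` into `{N ≤ 1/2}`
and the shell `{1/2 < N ≤ 1}`, on which `N^(s-r) ≥ 1`, gives
`I(1) ≥ 2^(-s) I(1) + |shell| ≥ I(1) + |shell|`, and the shell has positive measure because
`r ≥ 1`. Hence `I(1) = ∞`, and the `ε`-ball contains some `{N ≤ t}`.
-/

open MeasureTheory Metric Set Module Topology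
open scoped ENNReal

section Gauge

variable {E F : Type*} [NormedAddCommGroup E] [NormedAddCommGroup F]

/-- `gauge4 p = N(p)⁴` for the homogeneous gauge `N(x, y) = (‖x‖⁴ + ‖y‖²)^(1/4)`. -/
def gauge4 (p : E × F) : ℝ := ‖p.1‖ ^ 4 + ‖p.2‖ ^ 2

def gaugeBall (t : ℝ) : Set (E × F) := {p | gauge4 p ≤ t ^ 4}

lemma gauge4_nonneg (p : E × F) : 0 ≤ gauge4 p := by unfold gauge4; positivity

lemma continuous_gauge4 : Continuous (gauge4 : E × F → ℝ) := by unfold gauge4; fun_prop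

lemma isClosed_gaugeBall (t : ℝ) : IsClosed (gaugeBall t : Set (E × F)) :=
  isClosed_le continuous_gauge4 continuous_const

lemma gaugeBall_subset_gaugeBall {s t : ℝ} (hs : 0 ≤ s) (hst : s ≤ t) :
    gaugeBall s ⊆ (gaugeBall t : Set (E × F)) :=
  fun _ hp => hp.trans (pow_le_pow_left₀ hs hst 4)

lemma gaugeBall_mem_nhds_zero {t : ℝ} (ht : 0 < t) : gaugeBall t ∈ 𝓝 (0 : E × F) :=
  continuous_gauge4.continuousAt.preimage_mem_nhds
    (Iic_mem_nhds (by simpa [gauge4] using pow_pos ht 4))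

lemma gaugeBall_subset_closedBall {t : ℝ} (ht0 : 0 ≤ t) (ht1 : t ≤ 1) :
    gaugeBall t ⊆ closedBall (0 : E × F) t := by
  rintro ⟨x, y⟩ hp
  change ‖x‖ ^ 4 + ‖y‖ ^ 2 ≤ t ^ 4 at hp
  have ht42 : t ^ 4 ≤ t ^ 2 := pow_le_pow_of_le_one ht0 ht1 (by norm_num)
  have hx : ‖x‖ ≤ t := le_of_pow_le_pow_left₀ four_ne_zero ht0 (by linarith [sq_nonneg ‖y‖])
  have hy : ‖y‖ ≤ t :=
    le_of_pow_le_pow_left₀ two_ne_zero ht0 (by linarith [pow_nonneg (norm_nonneg x) 4])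
  simpa [Prod.norm_def] using ⟨hx, hy⟩

variable [NormedSpace ℝ E] [NormedSpace ℝ F]

def dilation (t : ℝ) : E × F → E × F := Prod.map (t • ·) (t ^ 2 • ·)

lemma gauge4_dilation (t : ℝ) (p : E × F) : gauge4 (dilation t p) = t ^ 4 * gauge4 p := by
  simp only [gauge4, dilation, Prod.map_fst, Prod.map_snd, norm_smul, Real.norm_eq_abs,
    abs_pow, mul_pow, sq_abs, (by decide : Even 4).pow_abs]
  ring

lemma dilation_mem_gaugeBall_iff {t : ℝ} (ht : 0 < t) {p : E × F} :
    dilation t p ∈ gaugeBall t ↔ p ∈ gaugeBall 1 := by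
  simp only [gaugeBall, mem_ofPred_eq, gauge4_dilation, one_pow]
  exact mul_le_iff_le_one_right (by positivity)

lemma ofReal_gauge4_rpow_dilation (e t : ℝ) (p : E × F) :
    ENNReal.ofReal (gauge4 (dilation t p) ^ e) =
      ENNReal.ofReal ((t ^ 4) ^ e) * ENNReal.ofReal (gauge4 p ^ e) := by
  rw [gauge4_dilation, Real.mul_rpow (by positivity) (gauge4_nonneg p),
    ENNReal.ofReal_mul (by positivity)]

section Measure

variable [MeasurableSpace E] [BorelSpace E] [MeasurableSpace F] [BorelSpace F]

lemma measurable_dilation (t : ℝ) : Measurable (dilation t : E × F → E × F) :=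
  (measurable_const_smul t).prodMap (measurable_const_smul _)

variable [FiniteDimensional ℝ E] [FiniteDimensional ℝ F]
  (μ : Measure E) [μ.IsAddHaarMeasure] (ν : Measure F) [ν.IsAddHaarMeasure]

lemma map_dilation_prod {t : ℝ} (ht : 0 < t) :
    (μ.prod ν).map (dilation t) =
      ENNReal.ofReal (t ^ (finrank ℝ E + 2 * finrank ℝ F))⁻¹ • μ.prod ν := by
  rw [dilation, ← Measure.map_prod_map _ _ (measurable_const_smul _) (measurable_const_smul _),
    Measure.map_addHaar_smul μ ht.ne', Measure.map_addHaar_smul ν (pow_ne_zero 2 ht.ne'),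
    Measure.prod_smul_left, Measure.prod_smul_right, smul_smul,
    ← ENNReal.ofReal_mul (abs_nonneg _), abs_of_pos (by positivity), abs_of_pos (by positivity),
    ← mul_inv, ← pow_mul, ← pow_add]

lemma lintegral_comp_dilation {g : E × F → ℝ≥0∞} (hg : Measurable g) {t : ℝ} (ht : 0 < t) :
    ∫⁻ p, g (dilation t p) ∂μ.prod ν =
      ENNReal.ofReal (t ^ (finrank ℝ E + 2 * finrank ℝ F))⁻¹ * ∫⁻ p, g p ∂μ.prod ν := by
  rw [← lintegral_map hg (measurable_dilation t), map_dilation_prod μ ν ht,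
    lintegral_smul_measure, smul_eq_mul]

lemma setLIntegral_gaugeBall_of_comp_dilation {g : E × F → ℝ≥0∞} (hg : Measurable g)
    {t : ℝ} (ht : 0 < t) {c : ℝ≥0∞} (hgc : ∀ p, g (dilation t p) = c * g p) :
    ∫⁻ p in gaugeBall t, g p ∂μ.prod ν =
      ENNReal.ofReal (t ^ (finrank ℝ E + 2 * finrank ℝ F)) * c *
        ∫⁻ p in gaugeBall 1, g p ∂μ.prod ν := by
  have hind : (fun p => (gaugeBall t).indicator g (dilation t p)) =
      (gaugeBall 1).indicator (fun p => c * g p) := by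
    ext p
    classical
    simp only [indicator_apply, dilation_mem_gaugeBall_iff ht, hgc]
  have key := lintegral_comp_dilation μ ν (hg.indicator (isClosed_gaugeBall t).measurableSet) ht
  rw [hind, lintegral_indicator (isClosed_gaugeBall 1).measurableSet,
    lintegral_indicator (isClosed_gaugeBall t).measurableSet, lintegral_const_mul c hg] at key
  rw [mul_assoc, key, ← mul_assoc, ← ENNReal.ofReal_mul (by positivity),
    mul_inv_cancel₀ (by positivity), ENNReal.ofReal_one, one_mul]

lemma measure_gaugeBall {t : ℝ} (ht : 0 < t) :
    μ.prod ν (gaugeBall t) =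
      ENNReal.ofReal (t ^ (finrank ℝ E + 2 * finrank ℝ F)) * μ.prod ν (gaugeBall 1) := by
  simpa only [setLIntegral_one, mul_one] using
    setLIntegral_gaugeBall_of_comp_dilation μ ν measurable_const ht (fun _ => (mul_one 1).symm)

lemma measure_gaugeBall_lt_measure_gaugeBall_one (hr : 0 < finrank ℝ E + 2 * finrank ℝ F)
    {t : ℝ} (ht0 : 0 < t) (ht1 : t < 1) :
    μ.prod ν (gaugeBall t) < μ.prod ν (gaugeBall 1) := by
  have hpos : 0 < μ.prod ν (gaugeBall 1) :=
    (μ.prod ν).measure_pos_of_mem_nhds (gaugeBall_mem_nhds_zero one_pos)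
  have hfin : μ.prod ν (gaugeBall 1) < ∞ :=
    (measure_mono (gaugeBall_subset_closedBall zero_le_one le_rfl)).trans_lt
      measure_closedBall_lt_top
  rw [measure_gaugeBall μ ν ht0]
  calc _ < 1 * μ.prod ν (gaugeBall 1) :=
        ENNReal.mul_lt_mul_left hpos.ne' hfin.ne
          (ENNReal.ofReal_lt_one.2 (pow_lt_one₀ ht0.le ht1 hr.ne'))
    _ = _ := one_mul _

lemma setLIntegral_gaugeBall_gauge4_rpow_eq_top (hr : 0 < finrank ℝ E + 2 * finrank ℝ F)
    {e : ℝ} (he : 4 * e + (finrank ℝ E + 2 * finrank ℝ F : ℕ) ≤ 0) {t : ℝ} (ht : 0 < t) :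
    ∫⁻ p in gaugeBall t, ENNReal.ofReal (gauge4 p ^ e) ∂μ.prod ν = ∞ := by
  have hG : Measurable fun p : E × F => ENNReal.ofReal (gauge4 p ^ e) :=
    (continuous_gauge4.measurable.pow_const e).ennreal_ofReal
  have hscale {τ : ℝ} (hτ : 0 < τ) :=
    setLIntegral_gaugeBall_of_comp_dilation μ ν hG hτ (ofReal_gauge4_rpow_dilation e τ)
  set J := ∫⁻ p in gaugeBall 1, ENNReal.ofReal (gauge4 p ^ e) ∂μ.prod ν
  suffices hJ : J = ∞ by
    rw [hscale ht, hJ, ENNReal.mul_top]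
    exact mul_ne_zero (ENNReal.ofReal_pos.2 (by positivity)).ne'
      (ENNReal.ofReal_pos.2 (by positivity)).ne'
  by_contra hJ
  have hhalf : J ≤ ∫⁻ p in gaugeBall (1 / 2), ENNReal.ofReal (gauge4 p ^ e) ∂μ.prod ν := by
    rw [hscale (by norm_num)]
    refine le_mul_of_one_le_left' ?_
    rw [← ENNReal.ofReal_mul (by positivity), ENNReal.one_le_ofReal, ← Real.rpow_natCast,
      ← Real.rpow_natCast, ← Real.rpow_mul (by norm_num), ← Real.rpow_add (by norm_num),
      add_comm]
    exact Real.one_le_rpow_of_pos_of_le_one_of_nonpos (by norm_num) (by norm_num)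
      (by exact_mod_cast he)
  have hshell : μ.prod ν (gaugeBall 1 \ gaugeBall (1 / 2)) ≤
      ∫⁻ p in gaugeBall 1 \ gaugeBall (1 / 2), ENNReal.ofReal (gauge4 p ^ e) ∂μ.prod ν := by
    rw [← setLIntegral_one]
    refine setLIntegral_mono hG fun p ⟨hp1, hp2⟩ => ENNReal.one_le_ofReal.2 ?_
    have hp1 : gauge4 p ≤ 1 := by simpa [gaugeBall] using hp1
    have hp2 : (1 / 2) ^ 4 < gauge4 p := by simpa [gaugeBall] using hp2
    exact Real.one_le_rpow_of_pos_of_le_one_of_nonpos (by linarith) hp1 (by linarith)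
  have hshell_pos : 0 < μ.prod ν (gaugeBall 1 \ gaugeBall (1 / 2)) :=
    (tsub_pos_of_lt (measure_gaugeBall_lt_measure_gaugeBall_one μ ν hr (by norm_num)
      (by norm_num))).trans_le le_measure_sdiff
  have hsplit : ∫⁻ p in gaugeBall (1 / 2), ENNReal.ofReal (gauge4 p ^ e) ∂μ.prod ν +
      ∫⁻ p in gaugeBall 1 \ gaugeBall (1 / 2), ENNReal.ofReal (gauge4 p ^ e) ∂μ.prod ν = J := by
    have := lintegral_inter_add_sdiff (μ := μ.prod ν) (fun p => ENNReal.ofReal (gauge4 p ^ e))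
      (gaugeBall 1) (isClosed_gaugeBall (1 / 2)).measurableSet
    rwa [inter_eq_right.2 (gaugeBall_subset_gaugeBall (by norm_num) (by norm_num))] at this
  exact (ENNReal.lt_add_right hJ hshell_pos.ne').not_ge
    ((add_le_add hhalf hshell).trans hsplit.le)

end Measure

end Gauge

/-- Lemma 1.1 (second half): for `r = a + 2b` and `s ≤ 0`, the gauge power
`N(x,y)^(s-r) = (‖x‖⁴ + ‖y‖²)^((s-r)/4)` is not integrable on any ball
around the origin of `ℝᵃ × ℝᵇ`. -/
theorem stmt1 (a b : ℕ) (hab : 1 ≤ a + 2 * b) (s : ℝ) (hs : s ≤ 0) :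
    ∀ ε : ℝ, 0 < ε →
      ¬ IntegrableOn
          (fun p : EuclideanSpace ℝ (Fin a) × EuclideanSpace ℝ (Fin b) =>
            (‖p.1‖ ^ 4 + ‖p.2‖ ^ 2) ^ ((s - (a + 2 * b : ℕ)) / 4))
          (Metric.ball 0 ε) volume := by
  intro ε hε hint
  set t := min 1 (ε / 2)
  have ht : 0 < t := lt_min one_pos (half_pos hε)
  have hsub : gaugeBall t ⊆ ball (0 : EuclideanSpace ℝ (Fin a) × EuclideanSpace ℝ (Fin b)) ε :=
    (gaugeBall_subset_closedBall ht.le (min_le_left _ _)).trans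
      (closedBall_subset_ball ((min_le_right _ _).trans_lt (half_lt_self hε)))
  refine (hint.mono_set hsub).lintegral_lt_top.ne ?_
  exact setLIntegral_gaugeBall_gauge4_rpow_eq_top volume volume
    (by simp only [finrank_euclideanSpace_fin]; omega)
    (by simp only [finrank_euclideanSpace_fin]; linarith) ht
end

section
/- Let n ≥ 1 and let s be a real number with 0 < s < n. There exists a real constant c > 0 such that for every Schwartz function f : ℝⁿ → ℂ the functions x ↦ ‖x‖^{−s} · (𝓕 f)(x) and x ↦ ‖x‖^{s−n} · f(x) are both integrable on ℝⁿ and ∫_{ℝⁿ} ‖x‖^{−s} (𝓕 f)(x) dx = c · ∫_{ℝⁿ} ‖x‖^{s−n} f(x) dx. (Equivalently, the distributional Fourier transform of the Riesz kernel ‖·‖^{−s} is a positive multiple of ‖·‖^{s−n}.) -/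
/-!
Gaussian subordination: for `x ≠ 0` and `p > 0`,
`∫₀^∞ t^(p/2 - 1) e^(-π t ‖x‖²) dt = π^(-p/2) Γ(p/2) ‖x‖^(-p)`.
Pairing with a Schwartz function and exchanging the integrals writes
`π^(-s/2) Γ(s/2) ∫ ‖x‖^(-s) 𝓕f(x) dx` as a Mellin integral of the Gaussian pairings
`t ↦ ∫ e^(-π t ‖x‖²) 𝓕f(x) dx`. By Parseval and the self-duality of the Gaussian these
equal `t^(-n/2) ∫ e^(-π ‖ξ‖²/t) f(ξ) dξ`, and the substitution `t ↦ 1/t` turns the Mellin integral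
into the one for `f` with exponent `n - s`, i.e. into
`π^(-(n-s)/2) Γ((n-s)/2) ∫ ‖x‖^(s-n) f(x) dx`.
-/

open MeasureTheory Set Real Module
open scoped FourierTransform SchwartzMap

/-- The real counterpart of `Complex.Gammaℝ`. -/
noncomputable def rieszConst (p : ℝ) : ℝ := π ^ (-(p / 2)) * Gamma (p / 2)

lemma rieszConst_pos {p : ℝ} (hp : 0 < p) : 0 < rieszConst p :=
  mul_pos (rpow_pos_of_pos pi_pos _) (Gamma_pos_of_pos (half_pos hp))

lemma integral_Ioi_rpow_mul_exp_neg_pi_mul_sq_mul {p r : ℝ} (hp : 0 < p) (hr : 0 < r) :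
    ∫ t in Ioi (0 : ℝ), t ^ (p / 2 - 1) * exp (-(π * r ^ 2 * t)) =
      rieszConst p * r ^ (-p) := by
  rw [integral_rpow_mul_exp_neg_mul_Ioi (half_pos hp) (by positivity), rieszConst,
    div_rpow zero_le_one (by positivity), one_rpow, mul_rpow pi_pos.le (by positivity),
    ← rpow_natCast, ← rpow_mul hr.le, rpow_neg pi_pos.le, rpow_neg hr.le,
    show ((2 : ℕ) : ℝ) * (p / 2) = p by ring]
  field_simp

section Integrability

variable {E F : Type*} [NormedAddCommGroup E] [NormedSpace ℝ E] [FiniteDimensional ℝ E]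
  [MeasurableSpace E] [BorelSpace E] {μ : Measure E} [μ.IsAddHaarMeasure]
  [NormedAddCommGroup F] [NormedSpace ℝ F]

lemma SchwartzMap.integrable_rpow_neg_norm_smul (g : 𝓢(E, F)) {p : ℝ} (hp : 0 ≤ p)
    (hpd : p < finrank ℝ E) : Integrable (fun x => ‖x‖ ^ (-p) • g x) μ := by
  have hmeas : AEStronglyMeasurable (fun x => ‖x‖ ^ (-p) • g x) μ :=
    (continuous_norm.measurable.pow_const _).aestronglyMeasurable.smul
      g.continuous.aestronglyMeasurable
  obtain ⟨C, -, hC⟩ := g.decay 0 0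
  simp only [pow_zero, one_mul, norm_iteratedFDeriv_zero] at hC
  rw [← integrableOn_univ, ← union_compl_self (Metric.ball 0 1)]
  refine IntegrableOn.union ?_ ?_
  · refine integrableOn_ball_of_norm_le_rpow (by exact_mod_cast hp.trans_lt hpd) hpd
      (C := C) (.of_forall fun x => ?_) hmeas
    rw [norm_smul, norm_of_nonneg (by positivity), mul_comm]
    exact mul_le_mul_of_nonneg_right (hC x) (by positivity)
  · refine g.integrable.norm.integrableOn.mono' hmeas.restrict ?_
    filter_upwards [self_mem_ae_restrict measurableSet_ball.compl] with x hx
    have hx1 : 1 ≤ ‖x‖ := by simpa using hx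
    rw [norm_smul, norm_of_nonneg (by positivity)]
    exact mul_le_of_le_one_left (norm_nonneg _)
      (rpow_le_one_of_one_le_of_nonpos hx1 (neg_nonpos.2 hp))

end Integrability

section Subordination

variable {E F : Type*} [NormedAddCommGroup E] [MeasurableSpace E] [NormedAddCommGroup F]
  [NormedSpace ℝ F]

noncomputable def gaussianPairing (μ : Measure E) (g : E → F) (t : ℝ) : F :=
  ∫ x, exp (-(π * ‖x‖ ^ 2 * t)) • g x ∂μ

variable [CompleteSpace F] [OpensMeasurableSpace E] {μ : Measure E} [SFinite μ]
  [NullSingletonClass μ]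

lemma integral_Ioi_rpow_smul_gaussianPairing {g : E → F} {p : ℝ} (hp : 0 < p)
    (hgm : AEStronglyMeasurable g μ) (hg : Integrable (fun x => ‖x‖ ^ (-p) • g x) μ) :
    ∫ t in Ioi (0 : ℝ), t ^ (p / 2 - 1) • gaussianPairing μ g t =
      rieszConst p • ∫ x, ‖x‖ ^ (-p) • g x ∂μ := by
  set k : ℝ → E → ℝ := fun t x => t ^ (p / 2 - 1) * exp (-(π * ‖x‖ ^ 2 * t))
  have hk_int (x : E) (hx : x ≠ 0) : IntegrableOn (k · x) (Ioi 0) := by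
    refine (integrableOn_rpow_mul_exp_neg_mul_rpow (s := p / 2 - 1) (by linarith) one_pos
      (by positivity : 0 < π * ‖x‖ ^ 2)).congr_fun (fun t _ => ?_) measurableSet_Ioi
    simp [k, rpow_one]
  have hk_integral (x : E) (hx : x ≠ 0) : ∫ t in Ioi 0, k t x = rieszConst p * ‖x‖ ^ (-p) :=
    integral_Ioi_rpow_mul_exp_neg_pi_mul_sq_mul hp (norm_pos_iff.2 hx)
  have hk_nonneg (t : ℝ) (ht : t ∈ Ioi 0) (x : E) : 0 ≤ k t x :=
    mul_nonneg (rpow_nonneg (le_of_lt ht) _) (exp_pos _).le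
  have hK : Integrable (fun q : ℝ × E => k q.1 q.2 • g q.2)
      ((volume.restrict (Ioi 0)).prod μ) := by
    have hmeas : AEStronglyMeasurable (fun q : ℝ × E => k q.1 q.2 • g q.2)
        ((volume.restrict (Ioi 0)).prod μ) :=
      (Measurable.aestronglyMeasurable (by fun_prop)).smul hgm.comp_snd
    refine (integrable_prod_iff' hmeas).2 ⟨?_, ?_⟩
    · filter_upwards [μ.ae_ne 0] with x hx
      exact (hk_int x hx).smul_const (g x)
    · refine (hg.norm.const_mul (rieszConst p)).congr ?_
      filter_upwards [μ.ae_ne 0] with x hx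
      rw [setIntegral_congr_fun measurableSet_Ioi (fun t ht => by
          rw [norm_smul, norm_of_nonneg (hk_nonneg t ht x)]),
        integral_mul_const, hk_integral x hx, norm_smul, norm_of_nonneg (by positivity),
        mul_assoc]
  calc ∫ t in Ioi (0 : ℝ), t ^ (p / 2 - 1) • gaussianPairing μ g t
      = ∫ t in Ioi (0 : ℝ), ∫ x, k t x • g x ∂μ := by
        refine setIntegral_congr_fun measurableSet_Ioi fun t _ => ?_
        simp only [gaussianPairing, k, ← integral_smul, mul_smul]
    _ = ∫ x, (∫ t in Ioi (0 : ℝ), k t x • g x) ∂μ := integral_integral_swap hK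
    _ = ∫ x, rieszConst p • ‖x‖ ^ (-p) • g x ∂μ := by
        refine integral_congr_ae ?_
        filter_upwards [μ.ae_ne 0] with x hx
        rw [integral_smul_const, hk_integral x hx, mul_smul]
    _ = rieszConst p • ∫ x, ‖x‖ ^ (-p) • g x ∂μ := integral_smul _ _

end Subordination

lemma integral_Ioi_rpow_smul_comp_inv {F : Type*} [NormedAddCommGroup F] [NormedSpace ℝ F]
    (G : ℝ → F) (a : ℝ) :
    ∫ t in Ioi (0 : ℝ), t ^ a • G t⁻¹ = ∫ u in Ioi (0 : ℝ), u ^ (-a - 2) • G u := by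
  rw [← integral_comp_rpow_Ioi (fun u => u ^ (-a - 2) • G u) (neg_ne_zero.2 one_ne_zero)]
  refine setIntegral_congr_fun measurableSet_Ioi fun t (ht : 0 < t) => ?_
  rw [rpow_neg_one, smul_smul, abs_neg, abs_one, one_mul, inv_rpow ht.le, ← rpow_neg ht.le,
    ← rpow_add ht]
  ring_nf

lemma ofReal_exp_neg_pi_mul_sq_norm_mul {V : Type*} [NormedAddCommGroup V] (t : ℝ) :
    (fun v : V => (exp (-(π * ‖v‖ ^ 2 * t)) : ℂ)) =
      fun v => Complex.exp (-((π * t : ℝ) : ℂ) * ‖v‖ ^ 2) := by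
  ext v
  push_cast
  ring_nf

section Fourier

variable {V F : Type*} [NormedAddCommGroup V] [InnerProductSpace ℝ V] [FiniteDimensional ℝ V]
  [MeasurableSpace V] [BorelSpace V] [NormedAddCommGroup F] [NormedSpace ℂ F] [CompleteSpace F]

lemma integral_fourier_smul_eq_integral_smul_fourier {f : V → ℂ} {g : V → F}
    (hf : Integrable f) (hg : Integrable g) : ∫ ξ, 𝓕 f ξ • g ξ = ∫ x, f x • 𝓕 g x := by
  have := VectorFourier.integral_fourierIntegral_smul_eq_flip (L := innerₗ V) (μ := volume)
    (ν := volume) continuous_fourierChar continuous_inner hf hg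
  rwa [flip_innerₗ] at this

lemma fourier_gaussian_pi_mul {t : ℝ} (ht : 0 < t) (ξ : V) :
    𝓕 (fun v : V => (exp (-(π * ‖v‖ ^ 2 * t)) : ℂ)) ξ =
      ((t ^ (-(finrank ℝ V / 2 : ℝ)) * exp (-(π * ‖ξ‖ ^ 2 * t⁻¹)) : ℝ) : ℂ) := by
  have hb : 0 < ((π * t : ℝ) : ℂ).re := by simpa using mul_pos pi_pos ht
  have hπt : (π : ℂ) / ((π * t : ℝ) : ℂ) = ((t⁻¹ : ℝ) : ℂ) := by
    push_cast
    field_simp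
  rw [ofReal_exp_neg_pi_mul_sq_norm_mul, fourier_gaussian_innerProductSpace hb ξ, hπt,
    show (finrank ℝ V / 2 : ℂ) = ((finrank ℝ V / 2 : ℝ) : ℂ) by push_cast; rfl,
    ← Complex.ofReal_cpow (by positivity), inv_rpow ht.le, ← rpow_neg ht.le]
  push_cast
  congr 2
  field_simp

lemma gaussianPairing_fourier {f : V → F} (hf : Integrable f) {t : ℝ} (ht : 0 < t) :
    gaussianPairing volume (𝓕 f) t =
      t ^ (-(finrank ℝ V / 2 : ℝ)) • gaussianPairing volume f t⁻¹ := by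
  have hγ : Integrable (fun v : V => (exp (-(π * ‖v‖ ^ 2 * t)) : ℂ)) := by
    rw [ofReal_exp_neg_pi_mul_sq_norm_mul]
    simpa using GaussianFourier.integrable_cexp_neg_mul_sq_norm_add
      (by simpa using mul_pos pi_pos ht) 0 (0 : V)
  calc gaussianPairing volume (𝓕 f) t
      = ∫ x, (exp (-(π * ‖x‖ ^ 2 * t)) : ℂ) • 𝓕 f x := by
        simp only [gaussianPairing, Complex.coe_smul]
    _ = ∫ ξ, 𝓕 (fun v : V => (exp (-(π * ‖v‖ ^ 2 * t)) : ℂ)) ξ • f ξ :=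
        (integral_fourier_smul_eq_integral_smul_fourier hγ hf).symm
    _ = t ^ (-(finrank ℝ V / 2 : ℝ)) • gaussianPairing volume f t⁻¹ := by
        simp only [fourier_gaussian_pi_mul ht, Complex.coe_smul, mul_smul, gaussianPairing,
          integral_smul]

lemma integral_Ioi_rpow_smul_gaussianPairing_fourier {f : V → F} (hf : Integrable f) (p : ℝ) :
    ∫ t in Ioi (0 : ℝ), t ^ (p / 2 - 1) • gaussianPairing volume (𝓕 f) t =
      ∫ t in Ioi (0 : ℝ), t ^ ((finrank ℝ V - p) / 2 - 1) • gaussianPairing volume f t := by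
  calc ∫ t in Ioi (0 : ℝ), t ^ (p / 2 - 1) • gaussianPairing volume (𝓕 f) t
      = ∫ t in Ioi (0 : ℝ),
          t ^ (p / 2 - 1 - finrank ℝ V / 2) • gaussianPairing volume f t⁻¹ := by
        refine setIntegral_congr_fun measurableSet_Ioi fun t (ht : 0 < t) => ?_
        rw [gaussianPairing_fourier hf ht, smul_smul, ← rpow_add ht, ← sub_eq_add_neg]
    _ = ∫ t in Ioi (0 : ℝ), t ^ ((finrank ℝ V - p) / 2 - 1) • gaussianPairing volume f t := by
        rw [integral_Ioi_rpow_smul_comp_inv]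
        ring_nf

end Fourier

theorem stmt4_general (n : ℕ) (s : ℝ) (hs0 : 0 < s) (hsn : s < n) :
    ∃ c : ℝ, 0 < c ∧
      ∀ f : SchwartzMap (EuclideanSpace ℝ (Fin n)) ℂ,
        Integrable (fun x : EuclideanSpace ℝ (Fin n) =>
          (‖x‖ ^ (-s) : ℝ) • 𝓕 (⇑f) x) volume ∧
        Integrable (fun x : EuclideanSpace ℝ (Fin n) =>
          (‖x‖ ^ (s - n) : ℝ) • f x) volume ∧
        ∫ x : EuclideanSpace ℝ (Fin n), (‖x‖ ^ (-s) : ℝ) • 𝓕 (⇑f) x =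
          c • ∫ x : EuclideanSpace ℝ (Fin n), (‖x‖ ^ (s - n) : ℝ) • f x := by
  have hd : finrank ℝ (EuclideanSpace ℝ (Fin n)) = n := finrank_euclideanSpace_fin
  have hns : 0 < n - s := sub_pos.2 hsn
  have : Nontrivial (EuclideanSpace ℝ (Fin n)) :=
    nontrivial_of_finrank_pos (R := ℝ) (by exact_mod_cast hd ▸ hs0.trans hsn)
  refine ⟨rieszConst (n - s) / rieszConst s,
    div_pos (rieszConst_pos hns) (rieszConst_pos hs0), fun f => ?_⟩
  have h𝓕f := (𝓕 f).integrable_rpow_neg_norm_smul (μ := volume) hs0.le (by rwa [hd])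
  have hf := f.integrable_rpow_neg_norm_smul (μ := volume) hns.le (by rw [hd]; linarith)
  rw [SchwartzMap.fourier_coe] at h𝓕f
  have key : rieszConst s • ∫ x, ‖x‖ ^ (-s) • 𝓕 (⇑f) x =
      rieszConst (n - s) • ∫ x, ‖x‖ ^ (-(n - s)) • f x := by
    rw [← integral_Ioi_rpow_smul_gaussianPairing hs0 (𝓕 f).continuous.aestronglyMeasurable
        h𝓕f,
      integral_Ioi_rpow_smul_gaussianPairing_fourier f.integrable, hd,
      integral_Ioi_rpow_smul_gaussianPairing hns f.continuous.aestronglyMeasurable hf]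
  rw [neg_sub] at hf key
  refine ⟨h𝓕f, hf, ?_⟩
  rw [div_eq_inv_mul, mul_smul, ← key, inv_smul_smul₀ (rieszConst_pos hs0).ne']

/-- Proposition 1.2, analytic core in the Euclidean case: the distributional
Fourier transform of the Riesz kernel `‖·‖^(−s)` is a positive multiple of
`‖·‖^(s−n)`, in the form of the identity
`∫ ‖x‖^(−s) (𝓕 f)(x) dx = c ∫ ‖x‖^(s−n) f(x) dx` for all Schwartz `f`. -/
theorem stmt4 (n : ℕ) (hn : 1 ≤ n) (s : ℝ) (hs0 : 0 < s) (hsn : s < n) :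
    ∃ c : ℝ, 0 < c ∧
      ∀ f : SchwartzMap (EuclideanSpace ℝ (Fin n)) ℂ,
        Integrable (fun x : EuclideanSpace ℝ (Fin n) =>
          (‖x‖ ^ (-s) : ℝ) • 𝓕 (⇑f) x) volume ∧
        Integrable (fun x : EuclideanSpace ℝ (Fin n) =>
          (‖x‖ ^ (s - n) : ℝ) • f x) volume ∧
        ∫ x : EuclideanSpace ℝ (Fin n), (‖x‖ ^ (-s) : ℝ) • 𝓕 (⇑f) x =
          c • ∫ x : EuclideanSpace ℝ (Fin n), (‖x‖ ^ (s - n) : ℝ) • f x :=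
  stmt4_general n s hs0 hsn
end

section
/- Let n ≥ 1 and let g, h be (n+1)×(n+1) matrices over ℍ with gᴴ J g = J and hᴴ J h = J. Then for every column vector z ∈ ℍⁿ with ‖z‖ ≤ 1, writing g = [[a_g, b_g], [c_g, d_g]] and h = [[a_h, b_h], [c_h, d_h]] in blocks: a_h + b_h·z ≠ 0, the point w = h•z = (c_h + d_h z)(a_h + b_h·z)⁻¹ satisfies ‖w‖ ≤ 1 and a_g + b_g·w ≠ 0, and the Möbius transformations compose correctly: (g·h)•z = g•(h•z), where g·h is the matrix product. -/
open Matrix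
open scoped Quaternion

/-- The diagonal matrix `J = diag(−1, 1, …, 1)` of the sesquilinear form `q` defining
`Sp(n, 1)`. -/
noncomputable def formJ (n : ℕ) : Matrix (Fin (n + 1)) (Fin (n + 1)) ℍ[ℝ] :=
  Matrix.diagonal fun i => if i = 0 then -1 else 1

/-- The Möbius transformation `g•z = (c + dz)(a + b·z)⁻¹` of `g = [[a, b], [c, d]]`. -/
noncomputable def mobius (n : ℕ) (g : Matrix (Fin (n + 1)) (Fin (n + 1)) ℍ[ℝ])
    (z : Fin n → ℍ[ℝ]) : Fin n → ℍ[ℝ] :=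
  fun i => (g i.succ 0 + ∑ j : Fin n, g i.succ j.succ * z j) *
    (g 0 0 + ∑ j : Fin n, g 0 j.succ * z j)⁻¹

namespace Stmt9Aux

variable {n : ℕ}

lemma coe_sum {s : Finset (Fin n)} {f : Fin n → ℝ} :
    ((∑ i ∈ s, f i : ℝ) : ℍ[ℝ]) = ∑ i ∈ s, ((f i : ℝ) : ℍ[ℝ]) := by
  rw [← Quaternion.algebraMap_def, map_sum]

noncomputable def lift (z : Fin n → ℍ[ℝ]) : Fin (n + 1) → ℍ[ℝ] := Fin.cons 1 z

noncomputable def Rw (x : Fin (n + 1) → ℍ[ℝ]) : Matrix (Fin 1) (Fin (n + 1)) ℍ[ℝ] :=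
  Matrix.of fun _ j => star (x j)

noncomputable def Cl (x : Fin (n + 1) → ℍ[ℝ]) : Matrix (Fin (n + 1)) (Fin 1) ℍ[ℝ] :=
  Matrix.of fun i _ => x i

noncomputable def Q (n : ℕ) (x : Fin (n + 1) → ℍ[ℝ]) : ℍ[ℝ] :=
  (Rw x * (formJ n * Cl x)) 0 0

lemma Rw_mulVec (h : Matrix (Fin (n + 1)) (Fin (n + 1)) ℍ[ℝ]) (x : Fin (n + 1) → ℍ[ℝ]) :
    Rw (h *ᵥ x) = Rw x * hᴴ := by
  refine Matrix.ext fun i j => ?_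
  simp [Rw, Matrix.mul_apply, Matrix.mulVec, dotProduct, star_sum, StarMul.star_mul]

lemma Cl_mulVec (h : Matrix (Fin (n + 1)) (Fin (n + 1)) ℍ[ℝ]) (x : Fin (n + 1) → ℍ[ℝ]) :
    Cl (h *ᵥ x) = h * Cl x := by
  refine Matrix.ext fun i j => ?_
  simp [Cl, Matrix.mul_apply, Matrix.mulVec, dotProduct]

lemma Q_invariance (h : Matrix (Fin (n + 1)) (Fin (n + 1)) ℍ[ℝ])
    (hh : hᴴ * formJ n * h = formJ n) (x : Fin (n + 1) → ℍ[ℝ]) :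
    Q n (h *ᵥ x) = Q n x := by
  unfold Q
  rw [Rw_mulVec, Cl_mulVec,
    show Rw x * hᴴ * (formJ n * (h * Cl x)) = Rw x * (hᴴ * formJ n * h * Cl x) by
      simp only [Matrix.mul_assoc], hh]

lemma Q_eq_coe (x : Fin (n + 1) → ℍ[ℝ]) :
    Q n x = (((-(‖x 0‖ ^ 2) + ∑ i : Fin n, ‖x i.succ‖ ^ 2 : ℝ)) : ℍ[ℝ]) := by
  have hq : ∀ a : ℍ[ℝ], star a * a = ((‖a‖ ^ 2 : ℝ) : ℍ[ℝ]) := by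
    intro a
    rw [Quaternion.star_mul_self, Quaternion.normSq_eq_norm_mul_self, sq]
  have h1 : Q n x
      = ∑ j : Fin (n + 1), star (x j) * ((if j = 0 then (-1 : ℍ[ℝ]) else 1) * x j) := by
    unfold Q Rw Cl formJ
    simp [Matrix.mul_apply, Matrix.diagonal_apply, ite_mul, Finset.sum_ite_eq,
      Finset.mem_univ]
  rw [h1, Fin.sum_univ_succ]
  simp only [if_pos rfl, Fin.succ_ne_zero, if_neg (Fin.succ_ne_zero _), one_mul, neg_one_mul,
    mul_neg, hq]
  rw [if_pos trivial]
  simp only [if_neg not_false, one_mul, neg_one_mul, mul_neg, hq]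
  rw [Quaternion.coe_add, Quaternion.coe_neg, coe_sum]

lemma denom_eq (h : Matrix (Fin (n + 1)) (Fin (n + 1)) ℍ[ℝ]) (z : Fin n → ℍ[ℝ]) :
    h 0 0 + ∑ j : Fin n, h 0 j.succ * z j = (h *ᵥ lift z) 0 := by
  simp [Matrix.mulVec, dotProduct, lift, Fin.sum_univ_succ]

lemma mobius_eq (h : Matrix (Fin (n + 1)) (Fin (n + 1)) ℍ[ℝ]) (z : Fin n → ℍ[ℝ]) :
    mobius n h z = fun i => (h *ᵥ lift z) i.succ * ((h *ᵥ lift z) 0)⁻¹ := by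
  funext i
  simp [mobius, Matrix.mulVec, dotProduct, lift, Fin.sum_univ_succ]

lemma realQ_lift (h : Matrix (Fin (n + 1)) (Fin (n + 1)) ℍ[ℝ])
    (hh : hᴴ * formJ n * h = formJ n) (z : Fin n → ℍ[ℝ]) :
    -(‖(h *ᵥ lift z) 0‖ ^ 2) + ∑ i : Fin n, ‖(h *ᵥ lift z) i.succ‖ ^ 2
      = -1 + ∑ i : Fin n, ‖z i‖ ^ 2 := by
  have h2 := Q_invariance h hh (lift z)
  rw [Q_eq_coe, Q_eq_coe] at h2
  have h3 := Quaternion.coe_injective h2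
  simpa [lift] using h3

lemma JJ : formJ n * formJ n = 1 := by
  rw [show formJ n = Matrix.diagonal fun i => if i = 0 then -1 else 1 from rfl,
    Matrix.diagonal_mul_diagonal,
    show ((fun i : Fin (n+1) => (if i = 0 then (-1 : ℍ[ℝ]) else 1) * if i = 0 then -1 else 1))
      = fun _ => (1 : ℍ[ℝ]) from funext fun i => by split <;> norm_num, Matrix.diagonal_one]

lemma mulVec_inj (h : Matrix (Fin (n + 1)) (Fin (n + 1)) ℍ[ℝ])
    (hh : hᴴ * formJ n * h = formJ n) {x : Fin (n + 1) → ℍ[ℝ]} (hx : h *ᵥ x = 0) : x = 0 := by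
  have hL : (formJ n * hᴴ * formJ n) * h = 1 := by
    calc (formJ n * hᴴ * formJ n) * h = formJ n * (hᴴ * formJ n * h) := by
          simp only [Matrix.mul_assoc]
      _ = 1 := by rw [hh, JJ]
  calc x = ((formJ n * hᴴ * formJ n) * h) *ᵥ x := by rw [hL, Matrix.one_mulVec]
    _ = (formJ n * hᴴ * formJ n) *ᵥ (h *ᵥ x) := by rw [Matrix.mulVec_mulVec]
    _ = 0 := by rw [hx, Matrix.mulVec_zero]

lemma key (h : Matrix (Fin (n + 1)) (Fin (n + 1)) ℍ[ℝ])
    (hh : hᴴ * formJ n * h = formJ n) (z : Fin n → ℍ[ℝ])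
    (hz : ∑ i : Fin n, ‖z i‖ ^ 2 ≤ 1) :
    (h *ᵥ lift z) 0 ≠ 0 ∧ (∑ i : Fin n, ‖mobius n h z i‖ ^ 2) ≤ 1 := by
  have hQ := realQ_lift h hh z
  have hle : ∑ i : Fin n, ‖(h *ᵥ lift z) i.succ‖ ^ 2 ≤ ‖(h *ᵥ lift z) 0‖ ^ 2 := by linarith
  have hd : (h *ᵥ lift z) 0 ≠ 0 := by
    intro h0
    have h1 : ∑ i : Fin n, ‖(h *ᵥ lift z) i.succ‖ ^ 2 ≤ 0 := by
      rw [h0] at hle; simpa using hle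
    have hs0 : ∑ i : Fin n, ‖(h *ᵥ lift z) i.succ‖ ^ 2 = 0 :=
      le_antisymm h1 (Finset.sum_nonneg fun i _ => by positivity)
    have hz0 := (Finset.sum_eq_zero_iff_of_nonneg (fun i _ => by positivity)).mp hs0
    have hall : h *ᵥ lift z = 0 := by
      funext j
      refine Fin.cases ?_ ?_ j
      · simpa using h0
      · intro i
        have := hz0 i (Finset.mem_univ i)
        simpa using this
    have hlz := mulVec_inj h hh hall
    have := congrFun hlz 0
    simp [lift] at this
  refine ⟨hd, ?_⟩
  have hnorm : ∀ i : Fin n, ‖mobius n h z i‖ ^ 2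
      = ‖(h *ᵥ lift z) i.succ‖ ^ 2 * (‖(h *ᵥ lift z) 0‖ ^ 2)⁻¹ := by
    intro i
    rw [mobius_eq]
    simp [norm_mul, norm_inv, mul_pow, inv_pow]
  rw [Finset.sum_congr rfl (fun i _ => hnorm i), ← Finset.sum_mul]
  have hpos : 0 < ‖(h *ᵥ lift z) 0‖ ^ 2 := by
    have := norm_pos_iff.mpr hd
    positivity
  rw [← div_eq_mul_inv, div_le_one hpos]
  exact hle

end Stmt9Aux

/-- Section 1.1: the Möbius transformations of elements of `Sp(n, 1)` define an action
on the closed unit ball of `ℍⁿ`: denominators do not vanish, the ball is preserved,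
and `(g h)•z = g•(h•z)`. -/
theorem stmt9 (n : ℕ) (hn : 1 ≤ n) (g h : Matrix (Fin (n + 1)) (Fin (n + 1)) ℍ[ℝ])
    (hg : gᴴ * formJ n * g = formJ n) (hh : hᴴ * formJ n * h = formJ n)
    (z : Fin n → ℍ[ℝ]) (hz : ∑ i : Fin n, ‖z i‖ ^ 2 ≤ 1) :
    h 0 0 + ∑ j : Fin n, h 0 j.succ * z j ≠ 0 ∧
    (∑ i : Fin n, ‖mobius n h z i‖ ^ 2) ≤ 1 ∧
    g 0 0 + ∑ j : Fin n, g 0 j.succ * mobius n h z j ≠ 0 ∧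
    mobius n (g * h) z = mobius n g (mobius n h z) := by
  open Stmt9Aux in
  obtain ⟨hd1, hball⟩ := Stmt9Aux.key h hh z hz
  obtain ⟨hd2, _⟩ := Stmt9Aux.key g hg (mobius n h z) hball
  refine ⟨by rw [Stmt9Aux.denom_eq]; exact hd1, hball,
    by rw [Stmt9Aux.denom_eq]; exact hd2, ?_⟩
  funext i
  set w' := h *ᵥ Stmt9Aux.lift z with hw'def
  set w := mobius n h z with hwdef
  have hw' : ∀ j, w' j = Stmt9Aux.lift w j * w' 0 := by
    intro j
    refine Fin.cases ?_ ?_ j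
    · simp [Stmt9Aux.lift]
    · intro k
      rw [Stmt9Aux.lift, Fin.cons_succ, hwdef, Stmt9Aux.mobius_eq]
      exact (inv_mul_cancel_right₀ hd1 _).symm
  have hgw : ∀ k, (g *ᵥ w') k = (g *ᵥ Stmt9Aux.lift w) k * w' 0 := by
    intro k
    simp only [Matrix.mulVec, dotProduct]
    rw [Finset.sum_mul]
    exact Finset.sum_congr rfl fun j _ => by rw [hw' j, mul_assoc]
  have hcomp : (g * h) *ᵥ Stmt9Aux.lift z = g *ᵥ w' := by
    rw [hw'def, Matrix.mulVec_mulVec]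
  have L := congrFun (Stmt9Aux.mobius_eq (g * h) z) i
  have R := congrFun (Stmt9Aux.mobius_eq g w) i
  rw [L, R, hcomp, hgw i.succ, hgw 0, _root_.mul_inv_rev, mul_assoc,
    ← mul_assoc (w' 0), mul_inv_cancel₀ hd1, one_mul]
end

section
/- Let n ≥ 1. For every column vector z ∈ ℍⁿ with ‖z‖ < 1 there exists an (n+1)×(n+1) matrix g over ℍ with gᴴ J g = J such that, writing g = [[a, b], [c, d]] in blocks, a ≠ 0 and c·a⁻¹ = z. That is, the group Sp(n, 1) acts transitively on the open unit ball of ℍⁿ via Möbius transformations (g•0 = c·a⁻¹). -/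
open Matrix
open scoped Quaternion

private lemma qcomm (r : ℝ) (x : ℍ[ℝ]) : x * (r : ℍ[ℝ]) = (r : ℍ[ℝ]) * x :=
  (Quaternion.coe_commutes r x).symm

private lemma qmulmul (r t : ℝ) (x y : ℍ[ℝ]) :
    ((r : ℍ[ℝ]) * x) * ((t : ℍ[ℝ]) * y) = ((r * t : ℝ) : ℍ[ℝ]) * (x * y) := by
  rw [Quaternion.coe_mul, mul_assoc, ← mul_assoc x, qcomm, mul_assoc, mul_assoc]

private lemma qcoe_sum {m : ℕ} (f : Fin m → ℝ) :
    ((∑ i, f i : ℝ) : ℍ[ℝ]) = ∑ i, ((f i : ℝ) : ℍ[ℝ]) :=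
  map_sum (algebraMap ℝ ℍ[ℝ]) f Finset.univ

private lemma star_mul_mul (q w : ℍ[ℝ]) :
    star q * (q * w) = ((Quaternion.normSq q : ℝ) : ℍ[ℝ]) * w := by
  rw [← mul_assoc, Quaternion.star_mul_self]

private lemma mul_star_mul (q w : ℍ[ℝ]) :
    (w * star q) * q = ((Quaternion.normSq q : ℝ) : ℍ[ℝ]) * w := by
  rw [mul_assoc, Quaternion.star_mul_self, qcomm]

private lemma qpull (r t : ℝ) (w : ℍ[ℝ]) :
    (r : ℍ[ℝ]) * (((t : ℝ) : ℍ[ℝ]) * w) = ((r * t : ℝ) : ℍ[ℝ]) * w := by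
  rw [← mul_assoc, ← Quaternion.coe_mul]

private lemma sandwich (q x y : ℍ[ℝ]) :
    (x * star q) * (q * y) = ((Quaternion.normSq q : ℝ) : ℍ[ℝ]) * (x * y) := by
  rw [mul_assoc, star_mul_mul, ← mul_assoc, qcomm, mul_assoc]

set_option maxHeartbeats 8000000 in
/-- Section 1.1: `Sp(n, 1)` acts transitively on the open unit ball of `ℍⁿ` via
Möbius transformations: every `z` with `‖z‖ < 1` is of the form `g•0 = c a⁻¹`
for some `g = [[a, b], [c, d]]` with `gᴴ J g = J`. -/
theorem stmt10 (n : ℕ) (hn : 1 ≤ n) (z : Fin n → ℍ[ℝ])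
    (hz : ∑ i : Fin n, ‖z i‖ ^ 2 < 1) :
    ∃ g : Matrix (Fin (n + 1)) (Fin (n + 1)) ℍ[ℝ],
      gᴴ * formJ n * g = formJ n ∧ g 0 0 ≠ 0 ∧
      ∀ i : Fin n, g i.succ 0 * (g 0 0)⁻¹ = z i := by
  have hs0 : (0:ℝ) ≤ ∑ i : Fin n, ‖z i‖ ^ 2 := Finset.sum_nonneg fun i _ => sq_nonneg _
  obtain ⟨s, hs_def, hs0, hs1⟩ :
      ∃ s : ℝ, (∑ i : Fin n, ‖z i‖ ^ 2) = s ∧ 0 ≤ s ∧ s < 1 := ⟨_, rfl, hs0, hz⟩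
  obtain ⟨γ, hγ_def⟩ : ∃ γ : ℝ, γ = (Real.sqrt (1 - s))⁻¹ := ⟨_, rfl⟩
  have hγpos : 0 < γ := hγ_def ▸ inv_pos.2 (Real.sqrt_pos.2 (by linarith))
  have hγ : γ ^ 2 * (1 - s) = 1 := by
    have h1s : (0:ℝ) < 1 - s := by linarith
    rw [hγ_def, ← Real.sqrt_inv, Real.sq_sqrt (by positivity)]
    rw [inv_mul_cancel₀ (by linarith)]
  obtain ⟨c, hc_def⟩ : ∃ c : ℝ, c = γ ^ 2 / (γ + 1) := ⟨_, rfl⟩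
  have hγ1 : γ + 1 ≠ 0 := by linarith
  have hcs : c * s = γ - 1 := by
    rw [hc_def]; field_simp; nlinarith
  have hA : -(γ * γ) + γ * γ * s = -1 := by nlinarith
  have hB : -(γ * γ) + (γ + γ * c * s) = 0 := by nlinarith
  have hC : -(γ * γ) + (c + (c + c * c * s)) = 0 := by
    have hcγ : c * (γ + 1) = γ ^ 2 := by rw [hc_def]; field_simp
    nlinarith
  have hsum : ∑ k : Fin n, Quaternion.normSq (z k) = s := by
    rw [← hs_def]
    refine Finset.sum_congr rfl fun k _ => ?_
    rw [Quaternion.normSq_eq_norm_mul_self, sq]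
  refine ⟨Matrix.of fun i j =>
    Fin.cases
      (Fin.cases ((γ : ℍ[ℝ])) (fun j' => (γ : ℍ[ℝ]) * star (z j')) j)
      (fun i' => Fin.cases ((γ : ℍ[ℝ]) * z i')
        (fun j' => (if i' = j' then 1 else 0)
            + (c : ℍ[ℝ]) * (z i' * star (z j'))) j) i, ?_, ?_, ?_⟩
  · rw [mul_assoc]
    apply Matrix.ext
    intro i j
    rw [Matrix.mul_apply]
    simp only [Matrix.conjTranspose_apply, formJ, Matrix.diagonal_mul,
      Matrix.of_apply, Matrix.diagonal_apply]
    induction i using Fin.cases with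
    | zero =>
      induction j using Fin.cases with
      | zero =>
        rw [Fin.sum_univ_succ]
        simp only [Fin.cases_zero, Fin.cases_succ, Fin.succ_ne_zero, if_true, if_false,
          if_pos rfl, Quaternion.star_coe, one_mul]
        have h1 : ∀ k : Fin n, star ((γ:ℍ[ℝ]) * z k) * ((γ:ℍ[ℝ]) * z k)
            = ((γ * γ * Quaternion.normSq (z k) : ℝ) : ℍ[ℝ]) := by
          intro k
          rw [StarMul.star_mul, Quaternion.star_coe, qcomm, qmulmul,
            Quaternion.star_mul_self, ← Quaternion.coe_mul]
        rw [Finset.sum_congr rfl fun k _ => h1 k, ← qcoe_sum, ← Finset.mul_sum, hsum]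
        have e1 : (γ:ℍ[ℝ]) * (-1 * (γ:ℍ[ℝ])) = ((-(γ*γ) : ℝ) : ℍ[ℝ]) := by
          push_cast; noncomm_ring
        rw [e1, ← Quaternion.coe_add, show (-(γ*γ) + γ*γ*s : ℝ) = (-1:ℝ) from hA]
        push_cast; ring_nf
      | succ j =>
        rw [Fin.sum_univ_succ]
        simp only [Fin.cases_zero, Fin.cases_succ, Fin.succ_ne_zero, if_true, if_false,
          if_pos rfl, Quaternion.star_coe, one_mul,
          if_neg (Ne.symm (Fin.succ_ne_zero j))]
        have h1 : ∀ x : Fin n, star ((γ:ℍ[ℝ]) * z x)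
              * ((if x = j then 1 else 0) + (c:ℍ[ℝ]) * (z x * star (z j)))
            = (if x = j then (γ:ℍ[ℝ]) * star (z x) else 0)
              + ((γ * c * Quaternion.normSq (z x) : ℝ) : ℍ[ℝ]) * star (z j) := by
          intro x
          rw [StarMul.star_mul, Quaternion.star_coe, qcomm, mul_add, mul_ite, mul_one, mul_zero,
            qmulmul, star_mul_mul, ← mul_assoc, ← Quaternion.coe_mul]
        rw [Finset.sum_congr rfl fun x _ => h1 x, Finset.sum_add_distrib,
          ← Finset.sum_mul, ← qcoe_sum, ← Finset.mul_sum, hsum]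
        simp only [Finset.sum_ite_eq', Finset.mem_univ, if_true]
        have e1 : (γ:ℍ[ℝ]) * (-1 * ((γ:ℍ[ℝ]) * star (z j)))
            = ((-(γ*γ) : ℝ) : ℍ[ℝ]) * star (z j) := by
          push_cast; noncomm_ring
        rw [e1, ← add_assoc, ← add_mul, ← add_mul, ← Quaternion.coe_add, ← Quaternion.coe_add,
          show (-(γ*γ) + γ + γ*c*s : ℝ) = (0:ℝ) by linarith [hB], Quaternion.coe_zero, zero_mul]
    | succ i =>
      induction j using Fin.cases with
      | zero =>
        rw [Fin.sum_univ_succ]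
        simp only [Fin.cases_zero, Fin.cases_succ, Fin.succ_ne_zero, if_true, if_false,
          if_pos rfl, one_mul]
        have h1 : ∀ x : Fin n, star ((if x = i then 1 else 0) + (c:ℍ[ℝ]) * (z x * star (z i)))
              * ((γ:ℍ[ℝ]) * z x)
            = (if x = i then (γ:ℍ[ℝ]) * z x else 0)
              + ((c * γ * Quaternion.normSq (z x) : ℝ) : ℍ[ℝ]) * z i := by
          intro x
          rw [star_add, apply_ite (star : ℍ[ℝ] → ℍ[ℝ]), star_one, star_zero,
            StarMul.star_mul, Quaternion.star_coe, StarMul.star_mul, star_star, qcomm,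
            add_mul, ite_mul, one_mul, zero_mul, qmulmul, mul_star_mul,
            ← mul_assoc, ← Quaternion.coe_mul]
        rw [Finset.sum_congr rfl fun x _ => h1 x, Finset.sum_add_distrib,
          ← Finset.sum_mul, ← qcoe_sum, ← Finset.mul_sum, hsum]
        simp only [Finset.sum_ite_eq', Finset.mem_univ, if_true]
        have e1 : star ((γ:ℍ[ℝ]) * star (z i)) * (-1 * (γ:ℍ[ℝ]))
            = ((-(γ*γ) : ℝ) : ℍ[ℝ]) * z i := by
          rw [StarMul.star_mul, star_star, Quaternion.star_coe, neg_one_mul, mul_neg,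
            mul_assoc, ← Quaternion.coe_mul, qcomm]
          push_cast; noncomm_ring
        rw [e1, ← add_mul, ← add_mul, ← Quaternion.coe_add, ← Quaternion.coe_add,
          show (-(γ*γ) + (γ + c*γ*s) : ℝ) = (0:ℝ) by linear_combination hB,
          Quaternion.coe_zero, zero_mul]
      | succ j =>
        rw [Fin.sum_univ_succ]
        simp only [Fin.cases_zero, Fin.cases_succ, Fin.succ_ne_zero, if_true, if_false,
          if_pos rfl, one_mul, Fin.succ_inj]
        have h1 : ∀ x : Fin n, star ((if x = i then 1 else 0) + (c:ℍ[ℝ]) * (z x * star (z i)))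
              * ((if x = j then 1 else 0) + (c:ℍ[ℝ]) * (z x * star (z j)))
            = (if x = i then (if x = j then 1 else 0) else 0)
              + ((if x = i then (c:ℍ[ℝ]) * (z x * star (z j)) else 0)
              + ((if x = j then (c:ℍ[ℝ]) * (z i * star (z x)) else 0)
              + ((c * c * Quaternion.normSq (z x) : ℝ) : ℍ[ℝ]) * (z i * star (z j)))) := by
          intro x
          rw [star_add, apply_ite (star : ℍ[ℝ] → ℍ[ℝ]), star_one, star_zero,
            StarMul.star_mul, Quaternion.star_coe, StarMul.star_mul, star_star, qcomm,
            add_mul, mul_add, mul_add, ite_mul, one_mul, zero_mul, mul_ite, mul_one, mul_zero,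
            qmulmul, sandwich, qpull, ite_mul, one_mul, zero_mul, add_assoc]
        rw [Finset.sum_congr rfl fun x _ => h1 x, Finset.sum_add_distrib,
          Finset.sum_add_distrib, Finset.sum_add_distrib,
          ← Finset.sum_mul, ← qcoe_sum, ← Finset.mul_sum, hsum]
        simp only [Finset.sum_ite_eq', Finset.mem_univ, if_true]
        have e1 : star ((γ:ℍ[ℝ]) * star (z i)) * (-1 * ((γ:ℍ[ℝ]) * star (z j)))
            = ((-(γ*γ) : ℝ) : ℍ[ℝ]) * (z i * star (z j)) := by
          rw [StarMul.star_mul, star_star, Quaternion.star_coe, qcomm, neg_one_mul, mul_neg,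
            qmulmul]
          push_cast; noncomm_ring
        rw [e1]
        have e2 : ((-(γ*γ) : ℝ) : ℍ[ℝ]) * (z i * star (z j))
              + ((if i = j then (1:ℍ[ℝ]) else 0)
              + ((c:ℍ[ℝ]) * (z i * star (z j))
              + ((c:ℍ[ℝ]) * (z i * star (z j))
              + ((c*c*s : ℝ) : ℍ[ℝ]) * (z i * star (z j)))))
            = (if i = j then (1:ℍ[ℝ]) else 0)
              + ((-(γ*γ) + (c + (c + c*c*s)) : ℝ) : ℍ[ℝ]) * (z i * star (z j)) := by
          push_cast; noncomm_ring
        rw [e2, hC, Quaternion.coe_zero, zero_mul, add_zero]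
  · simp only [Matrix.of_apply, Fin.cases_zero]
    have : ((γ:ℝ):ℍ[ℝ]) ≠ ((0:ℝ):ℍ[ℝ]) := by
      rw [ne_eq, Quaternion.coe_inj]; exact hγpos.ne'
    simpa using this
  · intro i
    simp only [Matrix.of_apply, Fin.cases_zero, Fin.cases_succ]
    rw [Quaternion.coe_commutes, mul_assoc, mul_inv_cancel₀, mul_one]
    rw [ne_eq, ← Quaternion.coe_zero, Quaternion.coe_inj]
    exact hγpos.ne'
end
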